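/- (Lemma 1, necessary conditions for approximate second-order critical points.) Let κ ≥ 0 and let X̂ ∈ ℝ^{n×r} satisfy ‖∇f(X̂)‖_F ≤ κ·‖X̂‖₂ and ∇²f(X̂) ⪰ −κ I_{nr}. Then X̂ also satisfies: (i) ‖𝐗̂ᵀ𝐇e‖ ≤ (2‖𝐀ᵀw‖ + κ)·‖X̂‖₂, and (ii) the nr×nr symmetric matrix 2·I_r ⊗ mat_S(𝐇e) + 𝐗̂ᵀ𝐇𝐗̂ + (2‖𝐀ᵀw‖ + κ)·I_{nr} is positive semidefinite. -/

import Mathlib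

open scoped BigOperators
open Matrix

noncomputable section

/-- Euclidean norm of a real vector indexed by `Fin k`. -/
def enormE {k : ℕ} (v : Fin k → ℝ) : ℝ := Real.sqrt (∑ i, (v i) ^ 2)

/-- Frobenius norm of a real matrix. -/
def fnorm {a b : ℕ} (M : Matrix (Fin a) (Fin b) ℝ) : ℝ :=
  Real.sqrt (∑ i, ∑ j, (M i j) ^ 2)

/-- Frobenius inner product of two real matrices. -/
def finner {a b : ℕ} (M N : Matrix (Fin a) (Fin b) ℝ) : ℝ := ∑ i, ∑ j, M i j * N i j

open Classical in
/-- The `i`-th largest eigenvalue (`0`-indexed, i.e. `eigval M 0` is the largest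
eigenvalue and `eigval M ⟨k-1,_⟩` the smallest) of a real symmetric matrix
(junk value `0` if the matrix is not symmetric). -/
def eigval {k : ℕ} (M : Matrix (Fin k) (Fin k) ℝ) (i : Fin k) : ℝ :=
  if h : M.IsHermitian then
    h.eigenvalues (Tuple.sort h.eigenvalues ⟨k - 1 - i.val, by have := i.isLt; omega⟩)
  else 0

/-- Spectral norm of a real matrix: `√(λ₁(XᵀX))`. -/
def specNorm {a b : ℕ} (X : Matrix (Fin a) (Fin b) ℝ) : ℝ :=
  if hb : 0 < b then Real.sqrt (eigval (Xᵀ * X) ⟨0, hb⟩) else 0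

/-- Smallest singular value `σ_b(X)` of `X ∈ ℝ^{a×b}`: the square root of the
smallest eigenvalue of `XᵀX`. -/
def sigmaMin {a b : ℕ} (X : Matrix (Fin a) (Fin b) ℝ) : ℝ :=
  if hb : 0 < b then Real.sqrt (eigval (Xᵀ * X) ⟨b - 1, by omega⟩) else 0

/-- Vectorization of a square matrix. -/
def vecSq {n : ℕ} (M : Matrix (Fin n) (Fin n) ℝ) : Fin (n * n) → ℝ :=
  fun k => M (finProdFinEquiv.symm k).1 (finProdFinEquiv.symm k).2

/-- Vectorization of an `n × r` matrix. -/
def vecR {n r : ℕ} (U : Matrix (Fin n) (Fin r) ℝ) : Fin (n * r) → ℝ :=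
  fun k => U (finProdFinEquiv.symm k).1 (finProdFinEquiv.symm k).2

/-- `mat_S(v) = (V + Vᵀ)/2` where `vec V = v`. -/
def matS {n : ℕ} (v : Fin (n * n) → ℝ) : Matrix (Fin n) (Fin n) ℝ :=
  (1 / 2 : ℝ) • ((Matrix.of fun i j => v (finProdFinEquiv (i, j))) +
    (Matrix.of fun i j => v (finProdFinEquiv (i, j)))ᵀ)

/-- The sensing operator `𝒜(M) = (⟨A₁,M⟩, …, ⟨A_m,M⟩)`. -/
def calA {n m : ℕ} (A : Fin m → Matrix (Fin n) (Fin n) ℝ)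
    (M : Matrix (Fin n) (Fin n) ℝ) : Fin m → ℝ := fun i => finner (A i) M

/-- Matrix representation `𝐀 ∈ ℝ^{m×n²}` of `𝒜`, satisfying `𝐀 ⬝ vec M = 𝒜(M)`. -/
def bigA {n m : ℕ} (A : Fin m → Matrix (Fin n) (Fin n) ℝ) :
    Matrix (Fin m) (Fin (n * n)) ℝ := Matrix.of fun i k => vecSq (A i) k

/-- `𝒜` satisfies the `(δ, g)`-RIP property. -/
def RIP {n m : ℕ} (A : Fin m → Matrix (Fin n) (Fin n) ℝ) (δ : ℝ) (g : ℕ) : Prop :=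
  ∀ M : Matrix (Fin n) (Fin n) ℝ, M.rank ≤ g →
    (1 - δ) * fnorm M ^ 2 ≤ enormE (calA A M) ^ 2 ∧
      enormE (calA A M) ^ 2 ≤ (1 + δ) * fnorm M ^ 2

/-- The matrix `𝐗̂ ∈ ℝ^{n² × nr}` satisfying `𝐗̂ ⬝ vec U = vec (X̂Uᵀ + UX̂ᵀ)`. -/
def bigX {n r : ℕ} (X : Matrix (Fin n) (Fin r) ℝ) :
    Matrix (Fin (n * n)) (Fin (n * r)) ℝ :=
  Matrix.of fun k l =>
    (if (finProdFinEquiv.symm k).2 = (finProdFinEquiv.symm l).1 then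
      X (finProdFinEquiv.symm k).1 (finProdFinEquiv.symm l).2 else 0) +
    (if (finProdFinEquiv.symm k).1 = (finProdFinEquiv.symm l).1 then
      X (finProdFinEquiv.symm k).2 (finProdFinEquiv.symm l).2 else 0)

/-- The Kronecker product `I_r ⊗ G`, realized as an operator on vectorized
`n × r` matrices (it sends `vec U` to `vec (G * U)`). -/
def kronIdR {n : ℕ} (r : ℕ) (G : Matrix (Fin n) (Fin n) ℝ) :
    Matrix (Fin (n * r)) (Fin (n * r)) ℝ :=
  Matrix.of fun k l =>
    if (finProdFinEquiv.symm k).2 = (finProdFinEquiv.symm l).2 then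
      G (finProdFinEquiv.symm k).1 (finProdFinEquiv.symm l).1 else 0

/-- Loewner order: `A ⪯ B` iff `B - A` is positive semidefinite. -/
def PSDle {k : ℕ} (A B : Matrix (Fin k) (Fin k) ℝ) : Prop := (B - A).PosSemidef

/-- The objective `f(X) = ½‖𝒜(XXᵀ) − b + w‖²` with `b = 𝒜(M*)`. -/
def fobj {n m r : ℕ} (A : Fin m → Matrix (Fin n) (Fin n) ℝ)
    (Mstar : Matrix (Fin n) (Fin n) ℝ) (w : Fin m → ℝ)
    (X : Matrix (Fin n) (Fin r) ℝ) : ℝ :=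
  (1 / 2) * enormE (fun i => calA A (X * Xᵀ) i - calA A Mstar i + w i) ^ 2

/-- View a point of Euclidean space as an `n × r` matrix. -/
def toMat {n r : ℕ} (x : EuclideanSpace ℝ (Fin n × Fin r)) : Matrix (Fin n) (Fin r) ℝ :=
  Matrix.of fun i j => x (i, j)

/-- View an `n × r` matrix as a point of Euclidean space (whose inner product is
the Frobenius inner product). -/
def vecE {n r : ℕ} (X : Matrix (Fin n) (Fin r) ℝ) : EuclideanSpace ℝ (Fin n × Fin r) :=
  WithLp.toLp 2 (fun p => X p.1 p.2)

/-- The objective as a function on Euclidean space. -/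
def fE {n m : ℕ} (r : ℕ) (A : Fin m → Matrix (Fin n) (Fin n) ℝ)
    (Mstar : Matrix (Fin n) (Fin n) ℝ) (w : Fin m → ℝ) :
    EuclideanSpace ℝ (Fin n × Fin r) → ℝ :=
  fun x => fobj A Mstar w (toMat x)

/-- Hessian quadratic form `D²f(X)[U, U]` (second Fréchet derivative). -/
def hessQF {n m : ℕ} (r : ℕ) (A : Fin m → Matrix (Fin n) (Fin n) ℝ)
    (Mstar : Matrix (Fin n) (Fin n) ℝ) (w : Fin m → ℝ)
    (X U : Matrix (Fin n) (Fin r) ℝ) : ℝ :=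
  iteratedFDeriv ℝ 2 (fE r A Mstar w) (vecE X) ![vecE U, vecE U]

/-- Gradient `∇f(X)` with respect to the Frobenius inner product, as a matrix. -/
def gradf {n m : ℕ} (r : ℕ) (A : Fin m → Matrix (Fin n) (Fin n) ℝ)
    (Mstar : Matrix (Fin n) (Fin n) ℝ) (w : Fin m → ℝ)
    (X : Matrix (Fin n) (Fin r) ℝ) : Matrix (Fin n) (Fin r) ℝ :=
  toMat (gradient (fE r A Mstar w) (vecE X))

/-!
Write `𝒜*v = ∑ᵢ vᵢAᵢ` for the adjoint of `𝒜`, `S = 𝒜*𝒜(X̂X̂ᵀ - M*)` and `W = 𝒜*w`, so that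
`𝐇e = vec S`, `𝐀ᵀw = vec W` and `‖𝐀ᵀw‖ = ‖W‖_F`. The objective is half a sum of squares of
quadratics, hence `∇f(X̂) = (G + Gᵀ)X̂` and `D²f(X̂)[U,U] = ‖𝒜(X̂Uᵀ + UX̂ᵀ)‖² + 2⟨G, UUᵀ⟩` with
`G = 𝒜*(𝒜(X̂X̂ᵀ - M*) + w) = S + W`.

(i) `𝐗̂ᵀ𝐇e = vec((S + Sᵀ)X̂)` and `(S + Sᵀ)X̂ = ∇f(X̂) - (W + Wᵀ)X̂`, where
`‖(W + Wᵀ)X̂‖_F ≤ 2‖W‖_F‖X̂‖₂`.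

(ii) At `vec U` the quadratic form of the matrix is
`D²f(X̂)[U,U] - 2⟨W, UUᵀ⟩ + (2‖W‖_F + κ)‖U‖_F²`, which is nonnegative because
`|⟨W, UUᵀ⟩| ≤ ‖W‖_F‖U‖_F²`.
-/

section Frobenius
variable {a b c : ℕ}

open scoped RealInnerProductSpace

attribute [local instance] Matrix.frobeniusNormedAddCommGroup

lemma fnorm_nonneg (M : Matrix (Fin a) (Fin b) ℝ) : 0 ≤ fnorm M := Real.sqrt_nonneg _

lemma fnorm_eq_norm_vecE (M : Matrix (Fin a) (Fin b) ℝ) : fnorm M = ‖vecE M‖ := by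
  simp [fnorm, vecE, EuclideanSpace.norm_eq, Fintype.sum_prod_type]

lemma finner_eq_inner_vecE (M N : Matrix (Fin a) (Fin b) ℝ) :
    finner M N = ⟪vecE M, vecE N⟫ := by
  simp [finner, vecE, PiLp.inner_apply, Fintype.sum_prod_type, mul_comm]

lemma fnorm_sq (M : Matrix (Fin a) (Fin b) ℝ) : fnorm M ^ 2 = finner M M := by
  rw [fnorm_eq_norm_vecE, finner_eq_inner_vecE, real_inner_self_eq_norm_sq]

lemma abs_finner_le (M N : Matrix (Fin a) (Fin b) ℝ) : |finner M N| ≤ fnorm M * fnorm N := by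
  simpa only [fnorm_eq_norm_vecE, finner_eq_inner_vecE] using abs_real_inner_le_norm _ _

lemma fnorm_eq_frobenius_norm (M : Matrix (Fin a) (Fin b) ℝ) : fnorm M = ‖M‖ := by
  simp [fnorm, Matrix.frobenius_norm_def, Real.sqrt_eq_rpow]

lemma fnorm_sub_le (M N : Matrix (Fin a) (Fin b) ℝ) : fnorm (M - N) ≤ fnorm M + fnorm N := by
  simpa only [fnorm_eq_frobenius_norm] using norm_sub_le M N

lemma fnorm_transpose (M : Matrix (Fin a) (Fin b) ℝ) : fnorm Mᵀ = fnorm M := by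
  simp only [fnorm_eq_frobenius_norm, Matrix.frobenius_norm_transpose]

lemma fnorm_mul_le (M : Matrix (Fin a) (Fin b) ℝ) (N : Matrix (Fin b) (Fin c) ℝ) :
    fnorm (M * N) ≤ fnorm M * fnorm N := by
  simpa only [fnorm_eq_frobenius_norm] using Matrix.frobenius_norm_mul M N

lemma fnorm_add_transpose_le (M : Matrix (Fin a) (Fin a) ℝ) : fnorm (M + Mᵀ) ≤ 2 * fnorm M := by
  calc fnorm (M + Mᵀ) ≤ fnorm M + fnorm Mᵀ := by
        simpa only [fnorm_eq_frobenius_norm] using norm_add_le M Mᵀ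
    _ = 2 * fnorm M := by rw [fnorm_transpose]; ring

end Frobenius

section FrobeniusInner
variable {a b n m : ℕ}

lemma finner_eq_trace (M N : Matrix (Fin a) (Fin b) ℝ) : finner M N = (Mᵀ * N).trace := by
  simp only [finner, Matrix.trace, Matrix.diag, Matrix.mul_apply, Matrix.transpose_apply]
  exact Finset.sum_comm

lemma finner_add_left (M M' N : Matrix (Fin a) (Fin b) ℝ) :
    finner (M + M') N = finner M N + finner M' N := by
  simp [finner_eq_trace, Matrix.add_mul]

lemma finner_add_right (M N N' : Matrix (Fin a) (Fin b) ℝ) :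
    finner M (N + N') = finner M N + finner M N' := by
  simp [finner_eq_trace, Matrix.mul_add]

lemma finner_sub_right (M N N' : Matrix (Fin a) (Fin b) ℝ) :
    finner M (N - N') = finner M N - finner M N' := by
  simp [finner_eq_trace, Matrix.mul_sub]

lemma finner_transpose (M N : Matrix (Fin a) (Fin b) ℝ) : finner Mᵀ Nᵀ = finner M N := by
  simp only [finner, Matrix.transpose_apply]
  exact Finset.sum_comm

lemma finner_smul_right (M N : Matrix (Fin a) (Fin b) ℝ) (c : ℝ) :
    finner M (c • N) = c * finner M N := by
  simp [finner_eq_trace]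

lemma finner_mul_eq_finner_mul_transpose (G : Matrix (Fin n) (Fin n) ℝ)
    (U : Matrix (Fin n) (Fin b) ℝ) :
    finner U (G * U) = finner G (U * Uᵀ) := by
  rw [finner_eq_trace, finner_eq_trace, Matrix.trace_mul_comm, Matrix.mul_assoc,
    ← Matrix.trace_transpose (Gᵀ * _), Matrix.transpose_mul, Matrix.transpose_transpose,
    Matrix.trace_mul_comm]
  simp [Matrix.transpose_mul]

lemma finner_add_transpose_mul_eq (S : Matrix (Fin n) (Fin n) ℝ)
    (U : Matrix (Fin n) (Fin b) ℝ) : finner U ((S + Sᵀ) * U) = 2 * finner S (U * Uᵀ) := by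
  rw [finner_mul_eq_finner_mul_transpose, finner_add_left, ← finner_transpose Sᵀ,
    Matrix.transpose_transpose, Matrix.transpose_mul, Matrix.transpose_transpose]
  ring

lemma finner_mul_transpose_add (G : Matrix (Fin n) (Fin n) ℝ) (X U : Matrix (Fin n) (Fin b) ℝ) :
    finner G (X * Uᵀ + U * Xᵀ) = finner ((G + Gᵀ) * X) U := by
  simp only [finner_eq_trace, Matrix.mul_add, Matrix.add_mul, Matrix.transpose_mul,
    Matrix.transpose_add, Matrix.transpose_transpose, Matrix.trace_add]
  rw [add_comm, ← Matrix.trace_transpose (Gᵀ * (X * Uᵀ)), ← Matrix.mul_assoc Gᵀ U,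
    Matrix.trace_mul_comm _ Xᵀ]
  simp [Matrix.transpose_mul, Matrix.mul_assoc, Matrix.trace_mul_comm U]

def calAadj (A : Fin m → Matrix (Fin n) (Fin n) ℝ) (v : Fin m → ℝ) : Matrix (Fin n) (Fin n) ℝ :=
  ∑ i, v i • A i

lemma finner_calAadj (A : Fin m → Matrix (Fin n) (Fin n) ℝ) (v : Fin m → ℝ)
    (N : Matrix (Fin n) (Fin n) ℝ) : finner (calAadj A v) N = v ⬝ᵥ calA A N := by
  simp [finner_eq_trace, calAadj, calA, dotProduct, Matrix.transpose_sum, Matrix.sum_mul,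
    Matrix.trace_sum]

end FrobeniusInner

section Vectorization
variable {n m r : ℕ}

lemma sum_finProdFin {a b : ℕ} {α : Type*} [AddCommMonoid α] (g : Fin (a * b) → α) :
    ∑ k, g k = ∑ p, ∑ q, g (finProdFinEquiv (p, q)) := by
  rw [← Equiv.sum_comp finProdFinEquiv g, Fintype.sum_prod_type]

@[simp] lemma vecSq_finProdFinEquiv (M : Matrix (Fin n) (Fin n) ℝ) (i j : Fin n) :
    vecSq M (finProdFinEquiv (i, j)) = M i j := by
  simp [vecSq]

@[simp] lemma vecR_finProdFinEquiv (U : Matrix (Fin n) (Fin r) ℝ) (i : Fin n) (j : Fin r) :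
    vecR U (finProdFinEquiv (i, j)) = U i j := by
  simp [vecR]

lemma vecR_surjective : Function.Surjective (vecR : Matrix (Fin n) (Fin r) ℝ → _) := fun y =>
  ⟨Matrix.of fun i j => y (finProdFinEquiv (i, j)), funext fun k => by
    simp only [vecR, Matrix.of_apply, Prod.mk.eta, Equiv.apply_symm_apply]⟩

lemma vecR_dotProduct_vecR (U V : Matrix (Fin n) (Fin r) ℝ) : vecR U ⬝ᵥ vecR V = finner U V := by
  simp [dotProduct, finner, sum_finProdFin]

lemma enormE_vecR (U : Matrix (Fin n) (Fin r) ℝ) : enormE (vecR U) = fnorm U := by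
  simp [enormE, fnorm, sum_finProdFin]

lemma enormE_vecSq (M : Matrix (Fin n) (Fin n) ℝ) : enormE (vecSq M) = fnorm M := by
  simp [enormE, fnorm, sum_finProdFin]

lemma bigA_mulVec_vecSq (A : Fin m → Matrix (Fin n) (Fin n) ℝ) (M : Matrix (Fin n) (Fin n) ℝ) :
    bigA A *ᵥ vecSq M = calA A M := by
  ext i
  simp [Matrix.mulVec, dotProduct, sum_finProdFin, bigA, calA, finner]

lemma bigA_transpose_mulVec (A : Fin m → Matrix (Fin n) (Fin n) ℝ) (v : Fin m → ℝ) :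
    (bigA A)ᵀ *ᵥ v = vecSq (calAadj A v) := by
  ext k
  simp [Matrix.mulVec, dotProduct, bigA, vecSq, calAadj, Matrix.sum_apply, mul_comm]

lemma bigX_mulVec_vecR (X U : Matrix (Fin n) (Fin r) ℝ) :
    bigX X *ᵥ vecR U = vecSq (X * Uᵀ + U * Xᵀ) := by
  ext k
  obtain ⟨⟨a, b⟩, rfl⟩ := finProdFinEquiv.surjective k
  simp only [Matrix.mulVec, dotProduct, sum_finProdFin, bigX, Matrix.of_apply,
    Equiv.symm_apply_apply, vecSq_finProdFinEquiv, vecR_finProdFinEquiv]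
  simp only [add_mul, ite_mul, zero_mul, Finset.sum_add_distrib, Matrix.add_apply, Matrix.mul_apply,
    Matrix.transpose_apply]
  congr 1 <;> rw [Finset.sum_comm] <;> simp [mul_comm]

lemma bigX_transpose_mulVec_vecSq (X : Matrix (Fin n) (Fin r) ℝ) (S : Matrix (Fin n) (Fin n) ℝ) :
    (bigX X)ᵀ *ᵥ vecSq S = vecR ((S + Sᵀ) * X) := by
  ext l
  obtain ⟨⟨a, c⟩, rfl⟩ := finProdFinEquiv.surjective l
  simp only [Matrix.mulVec, dotProduct, sum_finProdFin, Matrix.transpose_apply, bigX,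
    Matrix.of_apply, Equiv.symm_apply_apply, vecSq_finProdFinEquiv, vecR_finProdFinEquiv]
  simp only [add_mul, Finset.sum_add_distrib, Matrix.add_apply, Matrix.mul_apply,
    Matrix.transpose_apply]
  rw [add_comm]
  congr 1 <;> simp [mul_comm]

lemma kronIdR_mulVec_vecR (G : Matrix (Fin n) (Fin n) ℝ) (U : Matrix (Fin n) (Fin r) ℝ) :
    kronIdR r G *ᵥ vecR U = vecR (G * U) := by
  ext k
  obtain ⟨⟨a, c⟩, rfl⟩ := finProdFinEquiv.surjective k
  simp only [Matrix.mulVec, dotProduct, sum_finProdFin, kronIdR, Matrix.of_apply,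
    Equiv.symm_apply_apply]
  simp [Matrix.mul_apply, ite_mul]

lemma matS_vecSq (S : Matrix (Fin n) (Fin n) ℝ) : matS (vecSq S) = (1 / 2 : ℝ) • (S + Sᵀ) := by
  ext i j
  simp [matS]

end Vectorization

lemma dotProduct_transpose_mul_self_mulVec {k l : ℕ} (B : Matrix (Fin k) (Fin l) ℝ)
    (v : Fin l → ℝ) : v ⬝ᵥ (Bᵀ * B) *ᵥ v = (B *ᵥ v) ⬝ᵥ (B *ᵥ v) := by
  rw [← Matrix.mulVec_mulVec, Matrix.dotProduct_mulVec, Matrix.vecMul_transpose]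

lemma dotProduct_sq_le {n : ℕ} (u w : Fin n → ℝ) : (u ⬝ᵥ w) ^ 2 ≤ (u ⬝ᵥ u) * (w ⬝ᵥ w) :=
  Finset.sum_sq_le_sum_mul_sum_of_sq_le_mul _ (fun i _ => mul_self_nonneg (u i))
    (fun i _ => mul_self_nonneg (w i)) fun i _ => le_of_eq (by ring)

section SpectralNorm

lemma eigenvalues_le_eigval_zero {k : ℕ} (hk : 0 < k) {M : Matrix (Fin k) (Fin k) ℝ}
    (hM : M.IsHermitian) (j : Fin k) : hM.eigenvalues j ≤ eigval M ⟨0, hk⟩ := by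
  classical
  rw [eigval, dif_pos hM]
  have hj : hM.eigenvalues j = (hM.eigenvalues ∘ Tuple.sort hM.eigenvalues)
      ((Tuple.sort hM.eigenvalues).symm j) := by simp
  rw [hj]
  refine Tuple.monotone_sort hM.eigenvalues (Fin.le_def.mpr ?_)
  have := ((Tuple.sort hM.eigenvalues).symm j).isLt
  dsimp only
  omega

lemma posSemidef_eigval_zero_smul_one_sub {k : ℕ} (hk : 0 < k) {M : Matrix (Fin k) (Fin k) ℝ}
    (hM : M.IsHermitian) : (eigval M ⟨0, hk⟩ • 1 - M).PosSemidef := by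
  classical
  set c := eigval M ⟨0, hk⟩
  set U : Matrix (Fin k) (Fin k) ℝ := ↑hM.eigenvectorUnitary
  have hUU : U * star U = 1 := Unitary.mul_star_self_of_mem hM.eigenvectorUnitary.2
  have hD : Matrix.diagonal (fun j => c - hM.eigenvalues j) =
      c • 1 - Matrix.diagonal hM.eigenvalues := by
    ext i j
    by_cases h : i = j <;> simp [h]
  have hconj : c • 1 - M = U * Matrix.diagonal (fun j => c - hM.eigenvalues j) * Uᴴ := by
    conv_lhs => rw [hM.spectral_theorem]
    rw [Unitary.conjStarAlgAut_apply, hD, ← Matrix.star_eq_conjTranspose, Matrix.mul_sub,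
      Matrix.sub_mul, Matrix.mul_smul, Matrix.mul_one, Matrix.smul_mul, hUU]
    rfl
  rw [hconj]
  refine Matrix.PosSemidef.mul_mul_conjTranspose_same ?_ _
  simpa [sub_nonneg] using eigenvalues_le_eigval_zero hk hM

variable {a n r : ℕ}

lemma specNorm_nonneg (X : Matrix (Fin n) (Fin r) ℝ) : 0 ≤ specNorm X := by
  unfold specNorm
  split_ifs
  exacts [Real.sqrt_nonneg _, le_rfl]

lemma mulVec_dotProduct_self_le (X : Matrix (Fin n) (Fin r) ℝ) (v : Fin r → ℝ) :
    (X *ᵥ v) ⬝ᵥ (X *ᵥ v) ≤ specNorm X ^ 2 * (v ⬝ᵥ v) := by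
  classical
  rcases Nat.eq_zero_or_pos r with rfl | hr
  · simp [Matrix.mulVec, dotProduct]
  have hpsd := Matrix.posSemidef_conjTranspose_mul_self X
  rw [Matrix.conjTranspose_eq_transpose_of_trivial] at hpsd
  have hnn : 0 ≤ eigval (Xᵀ * X) ⟨0, hr⟩ :=
    (hpsd.eigenvalues_nonneg ⟨0, hr⟩).trans (eigenvalues_le_eigval_zero hr hpsd.1 _)
  have hsq : specNorm X ^ 2 = eigval (Xᵀ * X) ⟨0, hr⟩ := by
    rw [specNorm, dif_pos hr, Real.sq_sqrt hnn]
  have hquad := (posSemidef_eigval_zero_smul_one_sub hr hpsd.1).dotProduct_mulVec_nonneg v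
  simp only [star_trivial, Matrix.sub_mulVec, Matrix.smul_mulVec, Matrix.one_mulVec,
    dotProduct_sub, dotProduct_smul, smul_eq_mul, dotProduct_transpose_mul_self_mulVec] at hquad
  rw [hsq]
  linarith


lemma vecMul_dotProduct_self_le (X : Matrix (Fin n) (Fin r) ℝ) (u : Fin n → ℝ) :
    (u ᵥ* X) ⬝ᵥ (u ᵥ* X) ≤ specNorm X ^ 2 * (u ⬝ᵥ u) := by
  set v := u ᵥ* X
  have hs : 0 ≤ v ⬝ᵥ v := Finset.sum_nonneg fun i _ => mul_self_nonneg (v i)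
  have hu : 0 ≤ u ⬝ᵥ u := Finset.sum_nonneg fun i _ => mul_self_nonneg (u i)
  -- `‖v‖² = ⟨u, X v⟩ ≤ ‖u‖ ‖X v‖` and `‖X v‖² ≤ ‖X‖₂² ‖v‖²`
  have hcs : (v ⬝ᵥ v) ^ 2 ≤ (u ⬝ᵥ u) * ((X *ᵥ v) ⬝ᵥ (X *ᵥ v)) := by
    rw [show v ⬝ᵥ v = u ⬝ᵥ X *ᵥ v from (Matrix.dotProduct_mulVec u X v).symm]
    exact dotProduct_sq_le u (X *ᵥ v)
  have hX := mul_le_mul_of_nonneg_left (mulVec_dotProduct_self_le X v) hu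
  rcases hs.eq_or_lt with h0 | hpos
  · rw [← h0]
    positivity
  · refine le_of_mul_le_mul_right ?_ hpos
    nlinarith

lemma fnorm_mul_le_fnorm_mul_specNorm (W : Matrix (Fin a) (Fin n) ℝ)
    (X : Matrix (Fin n) (Fin r) ℝ) :
    fnorm (W * X) ≤ fnorm W * specNorm X := by
  have hsq : fnorm (W * X) ^ 2 ≤ (fnorm W * specNorm X) ^ 2 := by
    rw [mul_pow, fnorm_sq, fnorm_sq, mul_comm, finner, finner, Finset.mul_sum]
    exact Finset.sum_le_sum fun i _ => vecMul_dotProduct_self_le X (W i)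
  exact (pow_le_pow_iff_left₀ (fnorm_nonneg _)
    (mul_nonneg (fnorm_nonneg W) (specNorm_nonneg X)) two_ne_zero).mp hsq

end SpectralNorm

section HalfSumSq
variable {E ι : Type*} [NormedAddCommGroup E] [NormedSpace ℝ E] [Fintype ι]

lemma hasFDerivAt_bilinear_diag (B : E →L[ℝ] E →L[ℝ] ℝ) (x : E) :
    HasFDerivAt (fun y => B y y) (B x + B.flip x) x := by
  refine (B.hasFDerivAt_of_bilinear (hasFDerivAt_id x) (hasFDerivAt_id x)).congr_fderiv ?_
  ext u
  simp

variable (B : ι → E →L[ℝ] E →L[ℝ] ℝ) (c : ι → ℝ)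

def halfSumSq (x : E) : ℝ := 2⁻¹ * ∑ i, (B i x x + c i) ^ 2

lemma hasFDerivAt_halfSumSq (x : E) :
    HasFDerivAt (halfSumSq B c) (∑ i, (B i x x + c i) • (B i + (B i).flip) x) x := by
  refine ((HasFDerivAt.fun_sum (u := Finset.univ) fun i _ =>
    ((hasFDerivAt_bilinear_diag (B i) x).add_const (c i)).pow 2).const_mul 2⁻¹).congr_fderiv ?_
  ext u
  simp only [Nat.add_one_sub_one, pow_one, smul_add, nsmul_eq_mul, Nat.cast_ofNat,
    _root_.smul_apply, _root_.sum_apply, _root_.add_apply, smul_eq_mul,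
    ContinuousLinearMap.flip_apply, Finset.mul_sum]
  exact Finset.sum_congr rfl fun i _ => by ring

lemma fderiv_halfSumSq :
    fderiv ℝ (halfSumSq B c) = fun x => ∑ i, (B i x x + c i) • (B i + (B i).flip) x :=
  funext fun x => (hasFDerivAt_halfSumSq B c x).fderiv

lemma hasFDerivAt_fderiv_halfSumSq (x : E) :
    HasFDerivAt (fderiv ℝ (halfSumSq B c))
      (∑ i, ((B i x x + c i) • (B i + (B i).flip) +
        (B i x + (B i).flip x).smulRight ((B i + (B i).flip) x))) x := by
  rw [fderiv_halfSumSq]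
  exact HasFDerivAt.fun_sum fun i _ =>
    ((hasFDerivAt_bilinear_diag (B i) x).add_const (c i)).fun_smul (B i + (B i).flip).hasFDerivAt

lemma iteratedFDeriv_two_halfSumSq (x u : E) :
    iteratedFDeriv ℝ 2 (halfSumSq B c) x ![u, u] =
      ∑ i, ((B i x u + B i u x) ^ 2 + 2 * (B i x x + c i) * B i u u) := by
  rw [iteratedFDeriv_two_apply, (hasFDerivAt_fderiv_halfSumSq B c x).fderiv]
  simp only [_root_.add_apply, Fin.isValue, cons_val_zero, _root_.sum_apply, _root_.smul_apply,
    smul_add, ContinuousLinearMap.smulRight_apply, ContinuousLinearMap.flip_apply, cons_val_one,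
    cons_val_fin_one, smul_eq_mul]
  exact Finset.sum_congr rfl fun i _ => by ring

end HalfSumSq

section Objective
variable {n m r : ℕ} (A : Fin m → Matrix (Fin n) (Fin n) ℝ) (Mstar : Matrix (Fin n) (Fin n) ℝ)
  (w : Fin m → ℝ)

open scoped RealInnerProductSpace

def frobBilin (G : Matrix (Fin n) (Fin n) ℝ) :
    EuclideanSpace ℝ (Fin n × Fin r) →L[ℝ] EuclideanSpace ℝ (Fin n × Fin r) →L[ℝ] ℝ :=
  ∑ a, ∑ b, ∑ c, G a b • (EuclideanSpace.proj (a, c)).smulRight (EuclideanSpace.proj (b, c))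

lemma frobBilin_apply (G : Matrix (Fin n) (Fin n) ℝ) (x y : EuclideanSpace ℝ (Fin n × Fin r)) :
    frobBilin G x y = finner G (toMat x * (toMat y)ᵀ) := by
  simp [frobBilin, finner, toMat, Matrix.mul_apply, Finset.mul_sum]

@[simp] lemma toMat_vecE (X : Matrix (Fin n) (Fin r) ℝ) : toMat (vecE X) = X := rfl

def sensingResidual (X : Matrix (Fin n) (Fin r) ℝ) : Fin m → ℝ := calA A (X * Xᵀ - Mstar) + w

lemma fE_eq_halfSumSq : fE r A Mstar w =
    halfSumSq (fun i => frobBilin (A i)) (fun i => w i - finner (A i) Mstar) := by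
  ext x
  simp only [fE, fobj, halfSumSq, frobBilin_apply, enormE, calA]
  rw [Real.sq_sqrt (Finset.sum_nonneg fun _ _ => sq_nonneg _), one_div]
  congr 1
  exact Finset.sum_congr rfl fun i _ => by ring

lemma frobBilin_vecE_self_add (X : Matrix (Fin n) (Fin r) ℝ) (i : Fin m) :
    frobBilin (A i) (vecE X) (vecE X) + (w i - finner (A i) Mstar) =
      sensingResidual A Mstar w X i := by
  simp only [frobBilin_apply, toMat_vecE, sensingResidual, Pi.add_apply, calA, finner_sub_right]
  ring

lemma hessQF_eq (X U : Matrix (Fin n) (Fin r) ℝ) :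
    hessQF r A Mstar w X U =
      calA A (X * Uᵀ + U * Xᵀ) ⬝ᵥ calA A (X * Uᵀ + U * Xᵀ) +
        2 * finner (calAadj A (sensingResidual A Mstar w X)) (U * Uᵀ) := by
  rw [hessQF, fE_eq_halfSumSq, iteratedFDeriv_two_halfSumSq]
  simp only [frobBilin_vecE_self_add]
  simp only [frobBilin_apply, toMat_vecE, ← finner_add_right, finner_calAadj]
  simp [dotProduct, calA, Finset.sum_add_distrib, Finset.mul_sum, sq, mul_assoc]

lemma gradf_eq (X : Matrix (Fin n) (Fin r) ℝ) :
    gradf r A Mstar w X = (calAadj A (sensingResidual A Mstar w X) +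
      (calAadj A (sensingResidual A Mstar w X))ᵀ) * X := by
  set G := calAadj A (sensingResidual A Mstar w X)
  have hgrad : HasGradientAt (fE r A Mstar w) (vecE ((G + Gᵀ) * X)) (vecE X) := by
    rw [hasGradientAt_iff_hasFDerivAt, fE_eq_halfSumSq]
    refine (hasFDerivAt_halfSumSq _ _ _).congr_fderiv ?_
    ext u
    rw [InnerProductSpace.toDual_apply_apply, show u = vecE (toMat u) from rfl,
      ← finner_eq_inner_vecE, ← finner_mul_transpose_add, finner_calAadj]
    simp only [frobBilin_vecE_self_add]
    simp [frobBilin_apply, finner_add_right, dotProduct, calA, mul_add]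
  rw [gradf, hgrad.gradient]
  rfl

end Objective

section CriticalPoint
variable {n m r : ℕ}

lemma calAadj_add (A : Fin m → Matrix (Fin n) (Fin n) ℝ) (v v' : Fin m → ℝ) :
    calAadj A (v + v') = calAadj A v + calAadj A v' := by
  simp [calAadj, add_smul, Finset.sum_add_distrib]

lemma isSymm_matS (v : Fin (n * n) → ℝ) : (matS v).IsSymm :=
  (Matrix.isSymm_add_transpose_self _).smul _

lemma isSymm_kronIdR {G : Matrix (Fin n) (Fin n) ℝ} (hG : G.IsSymm) : (kronIdR r G).IsSymm :=
  Matrix.IsSymm.ext fun k l => by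
    simp only [kronIdR, Matrix.of_apply, eq_comm (a := (finProdFinEquiv.symm l).2), hG.apply]

lemma fnorm_add_transpose_mul_le_of_add {S W : Matrix (Fin n) (Fin n) ℝ}
    {X : Matrix (Fin n) (Fin r) ℝ} {κ : ℝ} (h : fnorm ((S + W + (S + W)ᵀ) * X) ≤ κ * specNorm X) :
    fnorm ((S + Sᵀ) * X) ≤ (2 * fnorm W + κ) * specNorm X := by
  have hsplit : (S + Sᵀ) * X = (S + W + (S + W)ᵀ) * X - (W + Wᵀ) * X := by
    rw [← Matrix.sub_mul, Matrix.transpose_add]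
    abel_nf
  have hW := mul_le_mul_of_nonneg_right (fnorm_add_transpose_le W) (specNorm_nonneg X)
  calc fnorm ((S + Sᵀ) * X)
      ≤ fnorm ((S + W + (S + W)ᵀ) * X) + fnorm ((W + Wᵀ) * X) := hsplit ▸ fnorm_sub_le _ _
    _ ≤ κ * specNorm X + 2 * fnorm W * specNorm X := by
        gcongr
        exact (fnorm_mul_le_fnorm_mul_specNorm _ X).trans hW
    _ = (2 * fnorm W + κ) * specNorm X := by ring

lemma abs_finner_mul_transpose_self_le (W : Matrix (Fin n) (Fin n) ℝ)
    (U : Matrix (Fin n) (Fin r) ℝ) :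
    |finner W (U * Uᵀ)| ≤ fnorm W * fnorm U ^ 2 := by
  calc |finner W (U * Uᵀ)| ≤ fnorm W * fnorm (U * Uᵀ) := abs_finner_le _ _
    _ ≤ fnorm W * (fnorm U * fnorm Uᵀ) := by gcongr; exacts [fnorm_nonneg W, fnorm_mul_le _ _]
    _ = fnorm W * fnorm U ^ 2 := by rw [fnorm_transpose, sq]

lemma quadForm_eq_hessQF_sub (A : Fin m → Matrix (Fin n) (Fin n) ℝ)
    (Mstar : Matrix (Fin n) (Fin n) ℝ) (w : Fin m → ℝ) (X U : Matrix (Fin n) (Fin r) ℝ) :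
    vecR U ⬝ᵥ ((2 : ℝ) • kronIdR r (matS (vecSq (calAadj A (calA A (X * Xᵀ - Mstar))))) +
        (bigX X)ᵀ * ((bigA A)ᵀ * bigA A) * bigX X) *ᵥ vecR U =
      hessQF r A Mstar w X U - 2 * finner (calAadj A w) (U * Uᵀ) := by
  have hXHX : (bigX X)ᵀ * ((bigA A)ᵀ * bigA A) * bigX X =
      (bigA A * bigX X)ᵀ * (bigA A * bigX X) := by
    simp [Matrix.transpose_mul, Matrix.mul_assoc]
  rw [hXHX, Matrix.add_mulVec, dotProduct_add, Matrix.smul_mulVec, dotProduct_smul,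
    kronIdR_mulVec_vecR, vecR_dotProduct_vecR, matS_vecSq, Matrix.smul_mul, finner_smul_right,
    finner_add_transpose_mul_eq, dotProduct_transpose_mul_self_mulVec,
    ← Matrix.mulVec_mulVec, bigX_mulVec_vecR, bigA_mulVec_vecSq, hessQF_eq, sensingResidual,
    calAadj_add, finner_add_left]
  simp only [smul_eq_mul]
  ring

end CriticalPoint

theorem statement5_general
    (n m r : ℕ)
    (A : Fin m → Matrix (Fin n) (Fin n) ℝ)
    (Mstar : Matrix (Fin n) (Fin n) ℝ)
    (w : Fin m → ℝ)
    (κ : ℝ)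
    (Xhat : Matrix (Fin n) (Fin r) ℝ)
    (hgrad : fnorm (gradf r A Mstar w Xhat) ≤ κ * specNorm Xhat)
    (hhess : ∀ U : Matrix (Fin n) (Fin r) ℝ,
      -(κ * fnorm U ^ 2) ≤ hessQF r A Mstar w Xhat U) :
    enormE (Matrix.mulVec (bigX Xhat)ᵀ
        (Matrix.mulVec ((bigA A)ᵀ * bigA A) (vecSq (Xhat * Xhatᵀ - Mstar)))) ≤
      (2 * enormE (Matrix.mulVec (bigA A)ᵀ w) + κ) * specNorm Xhat ∧
    Matrix.PosSemidef
      ((2 : ℝ) • kronIdR r (matS (Matrix.mulVec ((bigA A)ᵀ * bigA A)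
          (vecSq (Xhat * Xhatᵀ - Mstar)))) +
        (bigX Xhat)ᵀ * ((bigA A)ᵀ * bigA A) * bigX Xhat +
        (2 * enormE (Matrix.mulVec (bigA A)ᵀ w) + κ) •
          (1 : Matrix (Fin (n * r)) (Fin (n * r)) ℝ)) := by
  set S := calAadj A (calA A (Xhat * Xhatᵀ - Mstar))
  set W := calAadj A w
  have hHe : ((bigA A)ᵀ * bigA A) *ᵥ vecSq (Xhat * Xhatᵀ - Mstar) = vecSq S := by
    rw [← Matrix.mulVec_mulVec, bigA_mulVec_vecSq, bigA_transpose_mulVec]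
  have hAw : enormE ((bigA A)ᵀ *ᵥ w) = fnorm W := by
    rw [bigA_transpose_mulVec, enormE_vecSq]
  rw [hHe, hAw]
  constructor
  · rw [bigX_transpose_mulVec_vecSq, enormE_vecR]
    rw [gradf_eq, sensingResidual, calAadj_add] at hgrad
    exact fnorm_add_transpose_mul_le_of_add hgrad
  · refine Matrix.PosSemidef.of_dotProduct_mulVec_nonneg ?_ fun y => ?_
    · refine Matrix.isHermitian_iff_isSymm.mpr
        ((((isSymm_kronIdR (isSymm_matS _)).smul _).add ?_).add (Matrix.isSymm_one.smul _))
      simp [Matrix.IsSymm, Matrix.transpose_mul, Matrix.mul_assoc]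
    · obtain ⟨U, rfl⟩ := vecR_surjective y
      rw [star_trivial, Matrix.add_mulVec, dotProduct_add, quadForm_eq_hessQF_sub A Mstar w,
        Matrix.smul_mulVec, Matrix.one_mulVec, dotProduct_smul, vecR_dotProduct_vecR, ← fnorm_sq,
        smul_eq_mul]
      have hW := abs_le.mp (abs_finner_mul_transpose_self_le W U)
      nlinarith [hhess U]

/-- Lemma 1: necessary conditions for approximate second-order
critical points. -/
theorem statement5
    (n m r rs : ℕ) (hrs : 1 ≤ rs) (hrrs : rs ≤ r)
    (A : Fin m → Matrix (Fin n) (Fin n) ℝ)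
    (Mstar : Matrix (Fin n) (Fin n) ℝ) (hM : Mstar.PosSemidef) (hrank : Mstar.rank = rs)
    (w : Fin m → ℝ)
    (κ : ℝ) (hκ : 0 ≤ κ)
    (Xhat : Matrix (Fin n) (Fin r) ℝ)
    (hgrad : fnorm (gradf r A Mstar w Xhat) ≤ κ * specNorm Xhat)
    (hhess : ∀ U : Matrix (Fin n) (Fin r) ℝ,
      -(κ * fnorm U ^ 2) ≤ hessQF r A Mstar w Xhat U) :
    enormE (Matrix.mulVec (bigX Xhat)ᵀ
        (Matrix.mulVec ((bigA A)ᵀ * bigA A) (vecSq (Xhat * Xhatᵀ - Mstar)))) ≤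
      (2 * enormE (Matrix.mulVec (bigA A)ᵀ w) + κ) * specNorm Xhat ∧
    Matrix.PosSemidef
      ((2 : ℝ) • kronIdR r (matS (Matrix.mulVec ((bigA A)ᵀ * bigA A)
          (vecSq (Xhat * Xhatᵀ - Mstar)))) +
        (bigX Xhat)ᵀ * ((bigA A)ᵀ * bigA A) * bigX Xhat +
        (2 * enormE (Matrix.mulVec (bigA A)ᵀ w) + κ) •
          (1 : Matrix (Fin (n * r)) (Fin (n * r)) ℝ)) :=
  statement5_general n m r A Mstar w κ Xhat hgrad hhess
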